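/- Let A be a pseudo-BCI-algebra with x · y = (x → 1) ⇝ y and x ⋆ y = (y ⇝ 1) → x, and order x ≤ y iff x→y = 1. Then (x · y) · z ≤ x · (y · z) and x ⋆ (y ⋆ z) ≤ (x ⋆ y) ⋆ z for all x, y, z ∈ A. -/
import Mathlib


class PseudoBCI (A : Type*) where
  ar : A → A → A
  sq : A → A → A
  one : A
  ax1 : ∀ x y z : A, sq (ar x y) (sq (ar y z) (ar x z)) = one
  ax2 : ∀ x y z : A, ar (sq x y) (ar (sq y z) (sq x z)) = one
  ax3 : ∀ x : A, ar one x = x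
  ax4 : ∀ x : A, sq one x = x
  ax5 : ∀ x y : A, ar x y = one → ar y x = one → x = y

open PseudoBCI

section Lemmas

variable {A : Type*} [PseudoBCI A]

lemma P1 (y z : A) : sq y (sq (ar y z) z) = one := by
  have h := ax1 (one : A) y z
  rwa [ax3, ax3] at h

lemma P2 (y z : A) : ar y (ar (sq y z) z) = one := by
  have h := ax2 (one : A) y z
  rwa [ax4, ax4] at h

lemma L3 {x y : A} (h : ar x y = one) : sq x y = one := by
  have h1 := P1 x y
  rwa [h, ax4] at h1

lemma L4 {x y : A} (h : sq x y = one) : ar x y = one := by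
  have h1 := P2 x y
  rwa [h, ax3] at h1

lemma trans_ar {a b c : A} (h1 : ar a b = one) (h2 : ar b c = one) :
    ar a c = one := by
  have h := ax1 a b c
  rwa [h1, h2, ax4, ax4] at h

lemma a2dir {x y z : A} (h : ar x (ar y z) = one) : ar y (sq x z) = one := by
  have hy := P1 y z
  have hx : sq x (ar y z) = one := L3 h
  have h2 := ax2 x (ar y z) z
  rw [hx, ax3] at h2
  exact trans_ar (L4 hy) h2

lemma a2dir' {x y z : A} (h : ar x (sq y z) = one) : ar y (ar x z) = one := by
  have hy := P2 y z
  have h1 := ax1 x (sq y z) z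
  rw [h, ax4] at h1
  exact trans_ar hy (L4 h1)

end Lemmas

theorem stmt15 {A : Type*} [PseudoBCI A] (x y z : A) :
    ar (sq (ar (sq (ar x one) y) one) z) (sq (ar x one) (sq (ar y one) z)) = one ∧
    ar (ar (sq (ar (sq z one) y) one) x) (ar (sq z one) (ar (sq y one) x)) = one := by
  constructor
  · -- first part
    have s1 := P2 (ar x one) y
    have s2 := ax1 (sq (ar x one) y) y one
    have s3 : ar (ar x one) (sq (ar y one) (ar (sq (ar x one) y) one)) = one :=
      trans_ar s1 (L4 s2)
    have s4 := ax2 (ar y one) (ar (sq (ar x one) y) one) z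
    have s5 := trans_ar s3 s4
    exact a2dir s5
  · -- second part
    have s1 := P1 (sq z one) y
    have s2 := ax2 (ar (sq z one) y) y one
    have s3 : ar (sq z one) (ar (sq y one) (sq (ar (sq z one) y) one)) = one :=
      trans_ar (L4 s1) s2
    have s4 := ax1 (sq y one) (sq (ar (sq z one) y) one) x
    have s5 := trans_ar s3 (L4 s4)
    exact a2dir' s5
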